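/- For every integer ℓ ≥ 1 and every t ∈ [−1, 1], t²·ζ_ℓ(t) = b_ℓ·ζ_{ℓ−2}(t) + c_ℓ·ζ_ℓ(t) + b_{ℓ+2}·ζ_{ℓ+2}(t), where ζ_ℓ(t) = √((2ℓ+1)/(2ℓ(ℓ+1))) · √(1 − t²) · P'_ℓ(t) for ℓ ≥ 1, ζ₀ := 0 and ζ_{−1} := 0; a_ℓ = √( (ℓ+1)(ℓ−1) / ((2ℓ+1)(2ℓ−1)) ) for ℓ ≥ 1 and a₀ := 0; b_ℓ = a_ℓ·a_{ℓ−1}; and c_ℓ = a_ℓ² + a_{ℓ+1}². -/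
import Mathlib


open Real

/-- The Legendre polynomial `P_ℓ`, via the Rodrigues formula
`P_ℓ(t) = 1/(2^ℓ ℓ!) (d/dt)^ℓ (t² − 1)^ℓ`. -/
noncomputable def legendre (ℓ : ℕ) (t : ℝ) : ℝ :=
  (1 / (2 ^ ℓ * (Nat.factorial ℓ : ℝ))) * iteratedDeriv ℓ (fun s : ℝ => (s ^ 2 - 1) ^ ℓ) t

/-- The normalized associated Legendre function of order 1:
`ζ_ℓ(t) = √((2ℓ+1)/(2ℓ(ℓ+1))) √(1−t²) P'_ℓ(t)` for `ℓ ≥ 1`, with `ζ₀ := 0`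
(and `ζ_{−1} := 0`, handled by truncated subtraction on `ℕ`). -/
noncomputable def zeta (ℓ : ℕ) (t : ℝ) : ℝ :=
  if ℓ = 0 then 0 else
    Real.sqrt ((2 * (ℓ : ℝ) + 1) / (2 * (ℓ : ℝ) * ((ℓ : ℝ) + 1))) *
      Real.sqrt (1 - t ^ 2) * deriv (legendre ℓ) t

/-- The coefficient `a_ℓ = √((ℓ+1)(ℓ−1)/((2ℓ+1)(2ℓ−1)))` for `ℓ ≥ 1`, with `a₀ := 0`. -/
noncomputable def aCoef (ℓ : ℕ) : ℝ :=
  if ℓ = 0 then 0 else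
    Real.sqrt ((((ℓ : ℝ) + 1) * ((ℓ : ℝ) - 1)) / ((2 * (ℓ : ℝ) + 1) * (2 * (ℓ : ℝ) - 1)))

/-- The coefficient `b_ℓ = a_ℓ a_{ℓ−1}`. -/
noncomputable def bCoef (ℓ : ℕ) : ℝ := aCoef ℓ * aCoef (ℓ - 1)

/-- The coefficient `c_ℓ = a_ℓ² + a_{ℓ+1}²`. -/
noncomputable def cCoef (ℓ : ℕ) : ℝ := aCoef ℓ ^ 2 + aCoef (ℓ + 1) ^ 2

section aux
open Polynomial

noncomputable def rodU (m : ℕ) : Polynomial ℝ := (X ^ 2 - 1) ^ m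

lemma rodU_succ (m : ℕ) : rodU (m+1) = (X ^ 2 - 1) * rodU m := by
  simp [rodU, pow_succ]; ring

lemma iterate_derivative_add' (n : ℕ) (p q : Polynomial ℝ) :
    derivative^[n] (p + q) = derivative^[n] p + derivative^[n] q := by
  simp_rw [← Module.End.pow_apply, map_add]

lemma deriv_rodU (m : ℕ) :
    derivative (rodU (m+1)) = ((2*m+2 : ℕ) : Polynomial ℝ) * (X * rodU m) := by
  unfold rodU
  rw [derivative_pow]
  simp only [derivative_sub, derivative_one, derivative_X_pow, Nat.add_sub_cancel,
    Nat.cast_ofNat, pow_one, sub_zero, C_eq_natCast, map_ofNat]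
  push_cast
  ring

lemma dx (n : ℕ) (p : Polynomial ℝ) :
    derivative^[n] (X * p) = X * derivative^[n] p + (n : Polynomial ℝ) * derivative^[n-1] p := by
  induction n generalizing p with
  | zero => simp
  | succ n ih =>
    rw [Function.iterate_succ_apply, show derivative (X * p) = X * derivative p + p by
      rw [derivative_mul, derivative_X]; ring]
    rw [iterate_derivative_add', ih (derivative p), ← Function.iterate_succ_apply]
    cases n with
    | zero => simp
    | succ k =>
      rw [show k + 1 - 1 = k from rfl, show k + 1 + 1 - 1 = k + 1 from rfl,
        ← Function.iterate_succ_apply]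
      push_cast
      ring

lemma HH (m : ℕ) : ∀ k : ℕ, (X^2 - 1) * derivative^[k+1] (rodU m) =
    (2*(m : Polynomial ℝ) - 2*(k : Polynomial ℝ)) * (X * derivative^[k] (rodU m)) +
    ((k : Polynomial ℝ) * (2*(m : Polynomial ℝ) + 1 - (k : Polynomial ℝ))) *
      derivative^[k-1] (rodU m) := by
  intro k
  induction k with
  | zero =>
    cases m with
    | zero => simp [rodU]
    | succ j =>
      rw [Function.iterate_one, deriv_rodU]
      simp only [Function.iterate_zero_apply, rodU_succ j]
      push_cast
      ring
  | succ k ih =>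
    have h := congrArg derivative ih
    simp only [derivative_mul, derivative_sub, derivative_add, derivative_one, derivative_X,
      derivative_natCast, derivative_ofNat, derivative_X_pow, map_add, map_ofNat,
      C_eq_natCast, Nat.cast_ofNat,
      ← Function.iterate_succ_apply'] at h
    cases k with
    | zero =>
      simp only [Nat.cast_zero, Nat.cast_one] at h ⊢
      push_cast at h ⊢
      linear_combination h
    | succ j =>
      simp only [Nat.add_sub_cancel] at h ⊢
      push_cast at h ⊢
      linear_combination h

lemma lemA (m : ℕ) : derivative^[m+2] (rodU (m+1)) =
    ((2*m+2 : ℕ) : Polynomial ℝ) * (X * derivative^[m+1] (rodU m)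
      + ((m+1 : ℕ) : Polynomial ℝ) * derivative^[m] (rodU m)) := by
  rw [show derivative^[m+2] (rodU (m+1)) = derivative^[m+1] (derivative (rodU (m+1))) from
      Function.iterate_succ_apply _ _ _,
    deriv_rodU, iterate_derivative_natCast_mul, dx (m+1)]
  simp only [Nat.add_sub_cancel]

lemma lemB (m : ℕ) : derivative^[m+1] (rodU (m+1)) =
    ((2*m+2 : ℕ) : Polynomial ℝ) * (X * derivative^[m] (rodU m)
      + (m : Polynomial ℝ) * derivative^[m-1] (rodU m)) := by
  rw [show derivative^[m+1] (rodU (m+1)) = derivative^[m] (derivative (rodU (m+1))) from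
      Function.iterate_succ_apply _ _ _,
    deriv_rodU, iterate_derivative_natCast_mul, dx m]

lemma lemE (m : ℕ) : (X^2 - 1) * derivative^[m+1] (rodU m) =
    ((m : Polynomial ℝ) * ((m : Polynomial ℝ) + 1)) * derivative^[m-1] (rodU m) := by
  linear_combination HH m m

lemma lemT (m : ℕ) :
    (2*(m : Polynomial ℝ)+4) * (2*(m : Polynomial ℝ)+3) * (X * derivative^[m+2] (rodU (m+1))) =
      ((m : Polynomial ℝ)+1) * derivative^[m+3] (rodU (m+2)) +
        4*((m : Polynomial ℝ)+1)*((m : Polynomial ℝ)+2)^2 * derivative^[m+1] (rodU m) := by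
  have hA1 := lemA m
  have hA2 : derivative^[m+3] (rodU (m+2)) =
      ((2*(m+1)+2 : ℕ) : Polynomial ℝ) * (X * derivative^[m+2] (rodU (m+1))
        + ((m+1+1 : ℕ) : Polynomial ℝ) * derivative^[m+1] (rodU (m+1))) := lemA (m+1)
  have hB1 := lemB m
  have hE := lemE m
  push_cast at hA1 hA2 hB1
  rw [hA2, hA1, hB1]
  linear_combination (4*((m : Polynomial ℝ)+1)*((m : Polynomial ℝ)+2)^2) * hE

lemma iterD (P : Polynomial ℝ) (n : ℕ) :
    iteratedDeriv n (fun s : ℝ => P.eval s) = fun s => (derivative^[n] P).eval s := by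
  induction n with
  | zero => simp
  | succ n ih =>
    rw [iteratedDeriv_succ, ih, Function.iterate_succ_apply']
    funext s
    exact Polynomial.deriv _

lemma legendre_eq (ℓ : ℕ) : legendre ℓ =
    fun t => (1 / (2 ^ ℓ * (Nat.factorial ℓ : ℝ))) * (derivative^[ℓ] (rodU ℓ)).eval t := by
  funext t
  unfold legendre
  rw [show (fun s : ℝ => (s ^ 2 - 1) ^ ℓ) = fun s => (rodU ℓ).eval s by
      funext s; simp [rodU], iterD]

lemma deriv_legendre_eq (ℓ : ℕ) (t : ℝ) :
    (derivative^[ℓ+1] (rodU ℓ)).eval t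
      = 2 ^ ℓ * (Nat.factorial ℓ : ℝ) * deriv (legendre ℓ) t := by
  have h2 : (2:ℝ) ^ ℓ ≠ 0 := by positivity
  have hF : ((Nat.factorial ℓ : ℕ) : ℝ) ≠ 0 := by
    exact_mod_cast (Nat.factorial_ne_zero ℓ)
  rw [legendre_eq]
  rw [deriv_const_mul _ ((Polynomial.differentiable _).differentiableAt)]
  rw [Polynomial.deriv,
    show derivative (derivative^[ℓ] (rodU ℓ)) = derivative^[ℓ+1] (rodU ℓ) from
      (Function.iterate_succ_apply' _ _ _).symm]
  field_simp

lemma key (m : ℕ) (t : ℝ) :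
    (2*(m:ℝ)+3) * (t * deriv (legendre (m+1)) t) =
      ((m:ℝ)+1) * deriv (legendre (m+2)) t + ((m:ℝ)+2) * deriv (legendre m) t := by
  have h := congrArg (Polynomial.eval t) (lemT m)
  simp only [eval_mul, eval_add, eval_ofNat, eval_natCast, eval_X, eval_pow, eval_one] at h
  have d0 := deriv_legendre_eq m t
  have d1 : (derivative^[m+2] (rodU (m+1))).eval t
      = 2 ^ (m+1) * (Nat.factorial (m+1) : ℝ) * deriv (legendre (m+1)) t :=
    deriv_legendre_eq (m+1) t
  have d2 : (derivative^[m+3] (rodU (m+2))).eval t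
      = 2 ^ (m+2) * (Nat.factorial (m+2) : ℝ) * deriv (legendre (m+2)) t :=
    deriv_legendre_eq (m+2) t
  have e1 : ((Nat.factorial (m+1) : ℕ) : ℝ) = ((m:ℝ)+1) * (Nat.factorial m : ℝ) := by
    rw [Nat.factorial_succ]; push_cast; ring
  have e2 : ((Nat.factorial (m+2) : ℕ) : ℝ)
      = ((m:ℝ)+2) * (((m:ℝ)+1) * (Nat.factorial m : ℝ)) := by
    rw [show m+2 = (m+1)+1 from rfl, Nat.factorial_succ, Nat.factorial_succ]; push_cast; ring
  rw [d0, d1, d2, e1, e2] at h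
  have hF : ((Nat.factorial m : ℕ) : ℝ) ≠ 0 := by
    exact_mod_cast (Nat.factorial_ne_zero m)
  have hc : (4*((m:ℝ)+2)*((m:ℝ)+1)*2^m*(Nat.factorial m : ℝ)) ≠ 0 := by
    have h1 : (0:ℝ) < 4*((m:ℝ)+2)*((m:ℝ)+1)*2^m := by positivity
    exact mul_ne_zero (ne_of_gt h1) hF
  apply mul_left_cancel₀ hc
  linear_combination h
end aux
noncomputable def Nc (ℓ : ℕ) : ℝ :=
  Real.sqrt ((2 * (ℓ : ℝ) + 1) / (2 * (ℓ : ℝ) * ((ℓ : ℝ) + 1)))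

lemma zeta_pos (ℓ : ℕ) (h : ℓ ≠ 0) (t : ℝ) :
    zeta ℓ t = Nc ℓ * Real.sqrt (1 - t ^ 2) * deriv (legendre ℓ) t := by
  rw [zeta, if_neg h]; rfl

lemma Nc_eq (j : ℕ) : Nc j = Real.sqrt ((2 * (j:ℝ) + 1) / (2 * (j:ℝ) * ((j:ℝ) + 1))) := rfl

lemma aCoef_eq (j : ℕ) : aCoef (j+2) =
    Real.sqrt (((((j:ℝ)+3)) * ((j:ℝ)+1)) / ((2*(j:ℝ)+5) * (2*(j:ℝ)+3))) := by
  rw [aCoef, if_neg (by omega)]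
  congr 1
  push_cast
  ring

lemma coef1 (j : ℕ) : aCoef (j+2) * Nc (j+2) = (((j:ℝ)+1)/(2*(j:ℝ)+3)) * Nc (j+1) := by
  have h1 : (0:ℝ) < (j:ℝ) + 1 := by positivity
  have h2 : (0:ℝ) < (j:ℝ) + 2 := by positivity
  have h3 : (0:ℝ) < (j:ℝ) + 3 := by positivity
  have h4 : (0:ℝ) < 2*(j:ℝ) + 3 := by positivity
  have h5 : (0:ℝ) < 2*(j:ℝ) + 5 := by positivity
  rw [aCoef_eq, Nc_eq, Nc_eq,
    show ((((j:ℕ)+2) : ℕ) : ℝ) = (j:ℝ)+2 by push_cast; ring,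
    show ((((j:ℕ)+1) : ℕ) : ℝ) = (j:ℝ)+1 by push_cast; ring]
  rw [← Real.sqrt_mul (by positivity),
    show (((j:ℝ)+1)/(2*(j:ℝ)+3)) = Real.sqrt ((((j:ℝ)+1)/(2*(j:ℝ)+3))^2) by
      rw [Real.sqrt_sq (by positivity)],
    ← Real.sqrt_mul (by positivity)]
  congr 1
  field_simp
  ring

lemma coef2 (j : ℕ) : aCoef (j+2) * Nc (j+1) = (((j:ℝ)+3)/(2*(j:ℝ)+5)) * Nc (j+2) := by
  have h1 : (0:ℝ) < (j:ℝ) + 1 := by positivity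
  have h2 : (0:ℝ) < (j:ℝ) + 2 := by positivity
  have h3 : (0:ℝ) < (j:ℝ) + 3 := by positivity
  have h4 : (0:ℝ) < 2*(j:ℝ) + 3 := by positivity
  have h5 : (0:ℝ) < 2*(j:ℝ) + 5 := by positivity
  rw [aCoef_eq, Nc_eq, Nc_eq,
    show ((((j:ℕ)+2) : ℕ) : ℝ) = (j:ℝ)+2 by push_cast; ring,
    show ((((j:ℕ)+1) : ℕ) : ℝ) = (j:ℝ)+1 by push_cast; ring]
  rw [← Real.sqrt_mul (by positivity),
    show (((j:ℝ)+3)/(2*(j:ℝ)+5)) = Real.sqrt ((((j:ℝ)+3)/(2*(j:ℝ)+5))^2) by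
      rw [Real.sqrt_sq (by positivity)],
    ← Real.sqrt_mul (by positivity)]
  congr 1
  field_simp
  ring

lemma legendre_zero : legendre 0 = fun _ : ℝ => (1:ℝ) := by
  funext x
  simp [legendre]

lemma deriv_legendre_zero (t : ℝ) : deriv (legendre 0) t = 0 := by
  rw [legendre_zero]
  exact deriv_const t 1

lemma alpha (m : ℕ) (t : ℝ) :
    t * zeta (m+1) t = aCoef (m+1) * zeta m t + aCoef (m+2) * zeta (m+2) t := by
  cases m with
  | zero =>
    have hp0 := deriv_legendre_zero t
    have hk := key 0 t
    rw [hp0] at hk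
    norm_num at hk
    have hc := coef1 0
    norm_num at hc
    have hz0 : zeta 0 t = 0 := by simp [zeta]
    rw [zeta_pos 1 one_ne_zero, zeta_pos 2 two_ne_zero, hz0]
    simp only [Nat.zero_add]
    linear_combination (-(Real.sqrt (1-t^2) * deriv (legendre 2) t)) * hc
      + ((1/3) * Nc 1 * Real.sqrt (1-t^2)) * hk
  | succ k =>
    have hk := key (k+1) t
    push_cast at hk
    have h25 : (2*(k:ℝ)+5) ≠ 0 := by positivity
    have hk' : t * deriv (legendre (k+2)) t
        = ((k:ℝ)+2)/(2*(k:ℝ)+5) * deriv (legendre (k+3)) t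
          + ((k:ℝ)+3)/(2*(k:ℝ)+5) * deriv (legendre (k+1)) t := by
      field_simp
      linear_combination hk
    have hc1 := coef1 (k+1)
    push_cast at hc1
    have hc2 := coef2 k
    rw [show k+1+1 = k+2 from rfl, show k+1+2 = k+3 from rfl] at *
    rw [zeta_pos (k+2) (by omega), zeta_pos (k+1) (by omega), zeta_pos (k+3) (by omega)]
    linear_combination (Nc (k+2) * Real.sqrt (1-t^2)) * hk'
      - (Real.sqrt (1-t^2) * deriv (legendre (k+1)) t) * hc2
      - (Real.sqrt (1-t^2) * deriv (legendre (k+3)) t) * hc1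

/-- Identities (5.2.11)–(5.2.13): `t² ζ_ℓ = b_ℓ ζ_{ℓ−2} + c_ℓ ζ_ℓ + b_{ℓ+2} ζ_{ℓ+2}`. -/
theorem sq_mul_zeta_recurrence (ℓ : ℕ) (hℓ : 1 ≤ ℓ) (t : ℝ) (ht : t ∈ Set.Icc (-1 : ℝ) 1) :
    t ^ 2 * zeta ℓ t =
      bCoef ℓ * zeta (ℓ - 2) t + cCoef ℓ * zeta ℓ t + bCoef (ℓ + 2) * zeta (ℓ + 2) t := by
  obtain ⟨m, rfl⟩ : ∃ m, ℓ = m + 1 := ⟨ℓ - 1, (Nat.succ_pred_eq_of_pos hℓ).symm⟩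
  cases m with
  | zero =>
    have hz0 : zeta 0 t = 0 := by simp [zeta]
    have ha1 : aCoef 1 = 0 := by
      rw [aCoef, if_neg one_ne_zero]
      norm_num
    have h1 := alpha 0 t
    have h2 := alpha 1 t
    simp only [Nat.zero_add, show (1:ℕ) - 2 = 0 from rfl, show (1:ℕ) - 1 = 0 from rfl,
      show (3:ℕ) - 1 = 2 from rfl, show (1:ℕ) + 2 = 3 from rfl, show (1:ℕ) + 1 = 2 from rfl,
      bCoef, cCoef, hz0, ha1] at h1 h2 ⊢
    linear_combination t * h1 + aCoef 2 * h2
  | succ k =>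
    have h1 := alpha (k+1) t
    have h2 := alpha k t
    have h3 := alpha (k+2) t
    simp only [show k+1+1 = k+2 from rfl, show k+1+2 = k+3 from rfl,
      show k+2+1 = k+3 from rfl, show k+2+2 = k+4 from rfl, show k+2-2 = k from rfl,
      show k+2-1 = k+1 from rfl, show k+4-1 = k+3 from rfl,
      bCoef, cCoef] at h1 h2 h3 ⊢
    linear_combination t * h1 + aCoef (k+2) * h2 + aCoef (k+3) * h3
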